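/- Let G = PGL(2, F_q((t^{-1}))), Γ = PGL(2, F_q[t]), and W = PGL(2, F_q[[t^{-1}]]). Then G is the disjoint union over i ≥ 0 of the double cosets Γ · diag(t^i, 1) · W. -/

import Mathlib

open scoped OnePoint
open Polynomial

noncomputable section

attribute [local instance] Classical.propDecidable

/-- The field `K = F((t⁻¹))` of formal Laurent series in `t⁻¹`, modeled as
Laurent series in a variable `X = t⁻¹`. -/
abbrev K (F : Type) [Field F] := LaurentSeries F

/-- The element `t ∈ K`, i.e. `X⁻¹` where `X = t⁻¹`. -/
def tK (F : Type) [Field F] : K F := HahnSeries.single (-1 : ℤ) (1 : F)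

variable {F : Type} [Field F]

/-- The degree of a Laurent series in `t⁻¹`, as an exponent of `t`
(junk value `0` for `α = 0`). -/
def deg (α : K F) : ℤ := -α.order

/-- The leading coefficient of a Laurent series in `t⁻¹`. -/
def leadCoeff (α : K F) : F := α.coeff α.order

/-- Degree with the conventions `deg 0 = -∞`, valued in `WithBot (WithTop ℤ)`. -/
def degK (α : K F) : WithBot (WithTop ℤ) :=
  if α = 0 then ⊥ else (((deg α : ℤ) : WithTop ℤ) : WithBot (WithTop ℤ))

/-- Embedding of integers into the degree value type. -/
def zdeg (n : ℤ) : WithBot (WithTop ℤ) := ((n : WithTop ℤ) : WithBot (WithTop ℤ))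

/-- Degree on the projective line, with `deg ∞ = +∞`. -/
def degP : OnePoint (K F) → WithBot (WithTop ℤ) := fun x =>
  Option.elim x ((⊤ : WithTop ℤ) : WithBot (WithTop ℤ)) degK

/-- The polynomial subring `Z = F[t]` of `K`. -/
def Zsub (F : Type) [Field F] : Subalgebra F (K F) := Algebra.adjoin F {tK F}

/-- The set `t⁻¹ F[[t⁻¹]]` of fractional parts: series with only negative powers of `t`. -/
def FracSet (F : Type) [Field F] : Set (K F) := {f | ∀ i : ℤ, i ≤ 0 → f.coeff i = 0}

/-- Membership in the ring of integers `O = F[[t⁻¹]]`. -/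
def InO (α : K F) : Prop := ∀ i : ℤ, i < 0 → α.coeff i = 0

section Mobius

variable {R : Type} [Field R]

/-- The Möbius transformation of `P¹(R)` attached to the matrix `[[a,b],[c,d]]`. -/
def rawMob (a b c d : R) : OnePoint R → OnePoint R := fun x =>
  Option.elim x (if c = 0 then ∞ else ((a / c : R) : OnePoint R))
    (fun y => if c * y + d = 0 then ∞ else (((a * y + b) / (c * y + d) : R) : OnePoint R))

/-- The Möbius action of `GL(2,R)` on `P¹(R)`. -/
def mobius (g : GL (Fin 2) R) : OnePoint R → OnePoint R :=
  rawMob (g.val 0 0) (g.val 0 1) (g.val 1 0) (g.val 1 1)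

/-- The diagonal Möbius action on ordered triples. -/
def mob3 (g : GL (Fin 2) R) (w : OnePoint R × OnePoint R × OnePoint R) :
    OnePoint R × OnePoint R × OnePoint R :=
  (mobius g w.1, mobius g w.2.1, mobius g w.2.2)

/-- The triple is mutually distinct. -/
def Dist3 (w : OnePoint R × OnePoint R × OnePoint R) : Prop :=
  w.1 ≠ w.2.1 ∧ w.1 ≠ w.2.2 ∧ w.2.1 ≠ w.2.2

/-- The map `ω ↦ 1/ω` on `P¹(R)`. -/
def invP : OnePoint R → OnePoint R := fun x =>
  Option.elim x (((0 : R) : OnePoint R)) (fun y => if y = 0 then ∞ else ((y⁻¹ : R) : OnePoint R))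

end Mobius

/-- `γ` is (a representative in `GL(2,K)` of an element of) `Γ = PGL(2, F[t])`:
entries are polynomials in `t` and the determinant is a nonzero constant. -/
def InGammaRep (γ : GL (Fin 2) (K F)) : Prop :=
  (∀ i j, γ.val i j ∈ Zsub F) ∧ ∃ c : F, c ≠ 0 ∧ γ.val.det = algebraMap F (K F) c

/-- `w` is (a representative in `GL(2,K)` of an element of) `W = PGL(2, F[[t⁻¹]])`:
entries are integral and the determinant is a unit of `F[[t⁻¹]]`. -/
def InWRep (w : GL (Fin 2) (K F)) : Prop :=
  (∀ i j, InO (w.val i j)) ∧ (w.val.det).coeff 0 ≠ 0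

/-- The space of ordered triples of points of `P¹(K)`. -/
abbrev T3 (F : Type) [Field F] := OnePoint (K F) × OnePoint (K F) × OnePoint (K F)

/-- `S₀`: the leading coefficient of `ω₂` is `1`. -/
def S0 (F : Type) [Field F] : Set (T3 F) :=
  {w | ∃ β : K F, w.2.1 = (β : OnePoint (K F)) ∧ leadCoeff β = 1}

/-- `S₁`: `deg ω₁ < 0 < deg ω₃`. -/
def S1 (F : Type) [Field F] : Set (T3 F) :=
  {w | degP w.1 < zdeg 0 ∧ zdeg 0 < degP w.2.2}

/-- `S₂`: `deg ω₁ ≠ deg ω₂` and `deg ω₂ < deg ω₃`. -/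
def S2 (F : Type) [Field F] : Set (T3 F) :=
  {w | degP w.1 ≠ degP w.2.1 ∧ degP w.2.1 < degP w.2.2}

/-- `S₃`: `deg ω₁ = deg ω₂ = deg (ω₁ - ω₂)`. -/
def S3 (F : Type) [Field F] : Set (T3 F) :=
  {w | ∃ α β : K F, w.1 = (α : OnePoint (K F)) ∧ w.2.1 = (β : OnePoint (K F)) ∧
    degK α = degK β ∧ degK β = degK (α - β)}

end

/-!
Existence is a Euclidean algorithm on matrices `[[a, β], [0, 1]]`; write `ord` for the order in
`t⁻¹`. Column operations over `O` (right multiplication by `W`) and a scalar bring any `g` to this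
shape, and a row operation over `F[t]` makes `β` fractional, i.e. `ord β ≥ 1`. If `β / a ∈ O`, one
more column operation clears `β`, and `diag(a, 1)` lies in the double coset of
`diag(t^|ord a|, 1)`. Otherwise `[[a, β], [0, 1]]` is equivalent to `[[-a / β², 1 / β], [0, 1]]`,
and `ord (-a / β²) = ord a - 2 ord β < ord a`, so the process terminates.

For uniqueness, if `γ diag(tⁱ, 1) = e • diag(tʲ, 1) w`, determinants give `2 ord e = j - i`. The
first column of `γ` has a nonzero entry, a polynomial in `t`; comparing orders in that entry gives
`-i ≥ ord e - j`, hence `i ≤ j`.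
-/

namespace Cartan

open HahnSeries Matrix

variable {F : Type} [Field F]

lemma inO_iff_zero_le_orderTop {x : K F} : InO x ↔ 0 ≤ x.orderTop := by
  rw [le_orderTop_iff_forall]
  exact forall_congr' fun i => by rw [WithTop.coe_lt_zero]

lemma inO_iff_zero_le_order {x : K F} (hx : x ≠ 0) : InO x ↔ 0 ≤ x.order := by
  rw [inO_iff_zero_le_orderTop, ← order_eq_orderTop_of_ne_zero hx, WithTop.coe_nonneg]

variable (F) in
def integers : Subring (K F) where
  carrier := {x | InO x}
  zero_mem' := fun _ _ => rfl
  one_mem' := inO_iff_zero_le_orderTop.2 orderTop_one.ge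
  add_mem' hx hy := inO_iff_zero_le_orderTop.2 <|
    le_min (inO_iff_zero_le_orderTop.1 hx) (inO_iff_zero_le_orderTop.1 hy) |>.trans
      min_orderTop_le_orderTop_add
  mul_mem' hx hy := inO_iff_zero_le_orderTop.2 <| by
    rw [orderTop_mul]
    exact add_nonneg (inO_iff_zero_le_orderTop.1 hx) (inO_iff_zero_le_orderTop.1 hy)
  neg_mem' hx := inO_iff_zero_le_orderTop.2 <| by
    rw [orderTop_neg]; exact inO_iff_zero_le_orderTop.1 hx

@[simp] lemma inO_zero : InO (0 : K F) := (integers F).zero_mem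

@[simp] lemma inO_one : InO (1 : K F) := (integers F).one_mem

section Order

variable {Γ R : Type*} [AddCommGroup Γ] [LinearOrder Γ] [IsOrderedAddMonoid Γ] [Field R]
  {x y : HahnSeries Γ R}

lemma order_inv (hx : x ≠ 0) : x⁻¹.order = -x.order := by
  have := order_mul hx (inv_ne_zero hx)
  rw [mul_inv_cancel₀ hx, order_one] at this
  exact (neg_eq_of_add_eq_zero_right this.symm).symm

lemma order_div (hx : x ≠ 0) (hy : y ≠ 0) : (x / y).order = x.order - y.order := by
  rw [div_eq_mul_inv, order_mul hx (inv_ne_zero hy), order_inv hy, sub_eq_add_neg]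

end Order

lemma order_nonneg_of_inO {x : K F} (hx : InO x) : 0 ≤ x.order := by
  rcases eq_or_ne x 0 with rfl | hx0
  · exact order_zero.ge
  · exact (inO_iff_zero_le_order hx0).1 hx

lemma inO_inv_of_not_inO {x : K F} (hx : ¬ InO x) : InO x⁻¹ := by
  have hx0 : x ≠ 0 := by rintro rfl; exact hx (zero_mem (integers F))
  rw [inO_iff_zero_le_order hx0, not_le] at hx
  rw [inO_iff_zero_le_order (inv_ne_zero hx0), order_inv hx0]
  omega

lemma tK_pow (n : ℕ) : tK F ^ n = single (-(n : ℤ)) 1 := by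
  rw [tK, single_pow, one_pow, nsmul_eq_mul, mul_neg_one]

lemma tK_ne_zero : tK F ≠ 0 := single_ne_zero one_ne_zero

lemma tK_pow_ne_zero (n : ℕ) : tK F ^ n ≠ 0 := pow_ne_zero n tK_ne_zero

lemma order_tK_pow (n : ℕ) : (tK F ^ n).order = -n := by
  rw [tK_pow, order_single one_ne_zero]

lemma algebraMap_eq_single (a : F) : algebraMap F (K F) a = single 0 a := by
  rw [HahnSeries.algebraMap_apply', PowerSeries.algebraMap_apply, Algebra.algebraMap_self,
    RingHom.id_apply, ofPowerSeries_C, C_apply]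

lemma coeff_aeval_tK (P : F[X]) (i : ℤ) :
    (aeval (tK F) P).coeff i = if i ≤ 0 then P.coeff (-i).toNat else 0 := by
  induction P using Polynomial.induction_on' with
  | add p q hp hq =>
    rw [map_add, HahnSeries.coeff_add, hp, hq]
    split_ifs <;> simp
  | monomial n a =>
    rw [aeval_monomial, tK_pow, algebraMap_eq_single, single_mul_single, zero_add, mul_one,
      coeff_single, Polynomial.coeff_monomial]
    split_ifs <;> first | rfl | omega

lemma mem_Zsub_iff {x : K F} : x ∈ Zsub F ↔ ∃ P : F[X], aeval (tK F) P = x := by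
  rw [Zsub, Algebra.adjoin_singleton_eq_range_aeval]; rfl

lemma coeff_eq_zero_of_mem_Zsub {x : K F} (hx : x ∈ Zsub F) {i : ℤ} (hi : 0 < i) :
    x.coeff i = 0 := by
  obtain ⟨P, rfl⟩ := mem_Zsub_iff.1 hx
  rw [coeff_aeval_tK, if_neg (by omega)]

lemma order_nonpos_of_mem_Zsub {x : K F} (hx : x ∈ Zsub F) (hx0 : x ≠ 0) : x.order ≤ 0 := by
  by_contra! h
  exact hx0 (coeff_order_eq_zero.1 (coeff_eq_zero_of_mem_Zsub hx h))

lemma exists_mem_Zsub_sub_mem_FracSet (β : K F) : ∃ p ∈ Zsub F, β - p ∈ FracSet F := by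
  let P : F[X] := ∑ k ∈ Finset.range ((-β.order).toNat + 1), monomial k (β.coeff (-k))
  refine ⟨aeval (tK F) P, mem_Zsub_iff.2 ⟨P, rfl⟩, fun i hi => ?_⟩
  rw [HahnSeries.coeff_sub, coeff_aeval_tK, if_pos hi, sub_eq_zero]
  simp only [P, finsetSum_coeff, Polynomial.coeff_monomial, Finset.sum_ite_eq',
    Finset.mem_range]
  split_ifs with h
  · rw [Int.toNat_of_nonneg (by omega), neg_neg]
  · exact coeff_eq_zero_of_lt_order (by omega)

lemma one_le_order_of_mem_FracSet {f : K F} (hf : f ∈ FracSet F) (hf0 : f ≠ 0) :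
    1 ≤ f.order := by
  by_contra! h
  exact hf0 (coeff_order_eq_zero.1 (hf _ (by omega)))

section SubringMatrix

variable {R : Type*} [Field R] {n : Type*} {S : Subring R} {A B : Matrix n n R}

lemma one_apply_mem [DecidableEq n] (i j : n) : (1 : Matrix n n R) i j ∈ S := by
  rw [one_apply]; split_ifs
  exacts [S.one_mem, S.zero_mem]

lemma mul_apply_mem [Fintype n] (hA : ∀ i j, A i j ∈ S) (hB : ∀ i j, B i j ∈ S) (i j : n) :
    (A * B) i j ∈ S :=
  S.sum_mem fun k _ => S.mul_mem (hA i k) (hB k j)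

lemma exists_eq_map_subtype (hA : ∀ i j, A i j ∈ S) :
    ∃ A' : Matrix n n S, A = A'.map S.subtype :=
  ⟨of fun i j => ⟨A i j, hA i j⟩, rfl⟩

lemma det_mem [Fintype n] [DecidableEq n] (hA : ∀ i j, A i j ∈ S) : A.det ∈ S := by
  obtain ⟨A', rfl⟩ := exists_eq_map_subtype hA
  exact (S.subtype.map_det A').symm ▸ A'.det.2

lemma inv_apply_mem [Fintype n] [DecidableEq n] (hA : ∀ i j, A i j ∈ S) (hdet : A.det⁻¹ ∈ S)
    (i j : n) : A⁻¹ i j ∈ S := by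
  rw [Matrix.inv_def, Ring.inverse_eq_inv', Matrix.smul_apply, smul_eq_mul]
  refine S.mul_mem hdet ?_
  obtain ⟨A', rfl⟩ := exists_eq_map_subtype hA
  exact (S.subtype.map_adjugate A').symm ▸ (A'.adjugate i j).2

end SubringMatrix

lemma coeff_zero_ne_zero_iff {x : K F} (hx : InO x) : x.coeff 0 ≠ 0 ↔ x ≠ 0 ∧ x.order = 0 := by
  refine ⟨fun h => ?_, fun ⟨hx0, h⟩ => h ▸ mt coeff_order_eq_zero.1 hx0⟩
  have hx0 : x ≠ 0 := by rintro rfl; exact h rfl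
  exact ⟨hx0, le_antisymm (order_le_of_coeff_ne_zero h) ((inO_iff_zero_le_order hx0).1 hx)⟩

lemma inWRep_iff {w : GL (Fin 2) (K F)} :
    InWRep w ↔ (∀ i j, InO (w.val i j)) ∧ w.val.det ≠ 0 ∧ w.val.det.order = 0 :=
  and_congr_right fun hw => coeff_zero_ne_zero_iff (det_mem (S := integers F) hw)

variable (F) in
def gammaGroup : Subgroup (GL (Fin 2) (K F)) where
  carrier := {γ | InGammaRep γ}
  mul_mem' := by
    rintro γ γ' ⟨hγ, c, hc, hdet⟩ ⟨hγ', c', hc', hdet'⟩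
    refine ⟨mul_apply_mem (S := (Zsub F).toSubring) hγ hγ', c * c', mul_ne_zero hc hc', ?_⟩
    rw [Units.val_mul, det_mul, hdet, hdet', map_mul]
  one_mem' := ⟨one_apply_mem (S := (Zsub F).toSubring), 1, one_ne_zero,
    by rw [Units.val_one, det_one, map_one]⟩
  inv_mem' := by
    rintro γ ⟨hγ, c, hc, hdet⟩
    have hdet_inv : γ.val.det⁻¹ = algebraMap F (K F) c⁻¹ := by rw [hdet, map_inv₀]
    refine ⟨fun i j => ?_, c⁻¹, inv_ne_zero hc, ?_⟩
    · rw [coe_units_inv]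
      exact inv_apply_mem (S := (Zsub F).toSubring) hγ
        (hdet_inv ▸ Subalgebra.algebraMap_mem _ _) i j
    · rw [coe_units_inv, det_nonsing_inv, Ring.inverse_eq_inv', hdet_inv]

variable (F) in
def wGroup : Subgroup (GL (Fin 2) (K F)) where
  carrier := {w | InWRep w}
  mul_mem' := by
    rintro w w' hw hw'
    rw [Set.mem_ofPred_eq, inWRep_iff] at *
    obtain ⟨hw, hdet0, hdet⟩ := hw
    obtain ⟨hw', hdet0', hdet'⟩ := hw'
    rw [Units.val_mul, det_mul, order_mul hdet0 hdet0', hdet, hdet', add_zero]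
    exact ⟨mul_apply_mem (S := integers F) hw hw', mul_ne_zero hdet0 hdet0', rfl⟩
  one_mem' := by
    rw [Set.mem_ofPred_eq, inWRep_iff, Units.val_one, det_one]
    exact ⟨one_apply_mem (S := integers F), one_ne_zero, order_one⟩
  inv_mem' := by
    rintro w hw
    rw [Set.mem_ofPred_eq, inWRep_iff] at *
    obtain ⟨hw, hdet0, hdet⟩ := hw
    have hinv : InO w.val.det⁻¹ := by
      rw [inO_iff_zero_le_order (inv_ne_zero hdet0), order_inv hdet0, hdet, neg_zero]
    rw [coe_units_inv, det_nonsing_inv, Ring.inverse_eq_inv', order_inv hdet0, hdet, neg_zero]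
    exact ⟨inv_apply_mem (S := integers F) hw hinv, inv_ne_zero hdet0, rfl⟩

def InDoubleCoset (i : ℕ) (M : Matrix (Fin 2) (Fin 2) (K F)) : Prop :=
  ∃ (γ w : GL (Fin 2) (K F)) (c : (K F)ˣ), InGammaRep γ ∧ InWRep w ∧
    M = (c : K F) • (γ.val * !![(tK F) ^ i, 0; 0, 1] * w.val)

namespace InDoubleCoset

variable {i : ℕ} {M : Matrix (Fin 2) (Fin 2) (K F)}

lemma of_eq (h : InDoubleCoset i M) {N : Matrix (Fin 2) (Fin 2) (K F)} (hMN : M = N) :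
    InDoubleCoset i N :=
  hMN ▸ h

lemma self (i : ℕ) : InDoubleCoset i !![(tK F) ^ i, 0; 0, 1] :=
  ⟨1, 1, 1, (gammaGroup F).one_mem, (wGroup F).one_mem, by simp⟩

lemma smul (h : InDoubleCoset i M) {c : K F} (hc : c ≠ 0) : InDoubleCoset i (c • M) := by
  obtain ⟨γ, w, c', hγ, hw, rfl⟩ := h
  exact ⟨γ, w, Units.mk0 c hc * c', hγ, hw, by rw [smul_smul, Units.val_mul, Units.val_mk0]⟩

lemma mat_mul (h : InDoubleCoset i M) {A : Matrix (Fin 2) (Fin 2) (K F)}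
    (hA : ∀ k l, A k l ∈ Zsub F) {c : F} (hc : c ≠ 0) (hdet : A.det = algebraMap F (K F) c) :
    InDoubleCoset i (A * M) := by
  obtain ⟨γ, w, c', hγ, hw, rfl⟩ := h
  have hA0 : IsUnit A.det := by
    rw [hdet, isUnit_iff_ne_zero, map_ne_zero_iff _ (algebraMap F (K F)).injective]
    exact hc
  refine ⟨nonsingInvUnit A hA0 * γ, w, c', (gammaGroup F).mul_mem ⟨hA, c, hc, hdet⟩ hγ, hw, ?_⟩
  rw [Matrix.mul_smul, Units.val_mul, ← Matrix.mul_assoc, ← Matrix.mul_assoc]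
  rfl

lemma mul_mat (h : InDoubleCoset i M) {B : Matrix (Fin 2) (Fin 2) (K F)}
    (hB : ∀ k l, InO (B k l)) (hdet0 : B.det ≠ 0) (hdet : B.det.order = 0) :
    InDoubleCoset i (M * B) := by
  obtain ⟨γ, w, c, hγ, hw, rfl⟩ := h
  let w₀ := nonsingInvUnit B (isUnit_iff_ne_zero.2 hdet0)
  refine ⟨γ, w * w₀, c, hγ, (wGroup F).mul_mem hw (inWRep_iff.2 ⟨hB, hdet0, hdet⟩), ?_⟩
  rw [Matrix.smul_mul, Units.val_mul, Matrix.mul_assoc (_ * _)]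
  rfl

lemma upper_mul (h : InDoubleCoset i M) {p : K F} (hp : p ∈ Zsub F) :
    InDoubleCoset i (!![1, p; 0, 1] * M) :=
  h.mat_mul (fun k l => by fin_cases k <;> fin_cases l <;> simp [hp]) one_ne_zero
    (by simp [det_fin_two_of])

lemma swap_mul (h : InDoubleCoset i M) : InDoubleCoset i (!![0, 1; 1, 0] * M) :=
  h.mat_mul (fun k l => by fin_cases k <;> fin_cases l <;> simp) (neg_ne_zero.2 one_ne_zero)
    (by simp [det_fin_two_of])

lemma mul_upper (h : InDoubleCoset i M) {x : K F} (hx : InO x) :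
    InDoubleCoset i (M * !![1, x; 0, 1]) :=
  h.mul_mat (fun k l => by fin_cases k <;> fin_cases l <;> simp [hx]) (by simp [det_fin_two_of])
    (by simp [det_fin_two_of])
lemma mul_lower (h : InDoubleCoset i M) {x : K F} (hx : InO x) :
    InDoubleCoset i (M * !![1, 0; x, 1]) :=
  h.mul_mat (fun k l => by fin_cases k <;> fin_cases l <;> simp [hx]) (by simp [det_fin_two_of])
    (by simp [det_fin_two_of])

lemma mul_swap (h : InDoubleCoset i M) : InDoubleCoset i (M * !![0, 1; 1, 0]) :=
  h.mul_mat (fun k l => by fin_cases k <;> fin_cases l <;> simp) (by simp [det_fin_two_of])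
    (by simp [det_fin_two_of])

lemma mul_diag (h : InDoubleCoset i M) {u : K F} (hu0 : u ≠ 0) (hu : u.order = 0) :
    InDoubleCoset i (M * !![u, 0; 0, 1]) :=
  h.mul_mat (fun k l => by
      fin_cases k <;> fin_cases l <;> simp [inO_iff_zero_le_order hu0, hu])
    (by simpa [det_fin_two_of] using hu0) (by simpa [det_fin_two_of] using hu)

end InDoubleCoset

lemma inDoubleCoset_diag_of_order_nonpos {a : K F} (ha : a ≠ 0) (h : a.order ≤ 0) :
    InDoubleCoset (-a.order).toNat !![a, 0; 0, 1] := by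
  set n := (-a.order).toNat
  have hu0 : a / tK F ^ n ≠ 0 := div_ne_zero ha (tK_pow_ne_zero n)
  have hu : (a / tK F ^ n).order = 0 := by
    rw [order_div ha (tK_pow_ne_zero n), order_tK_pow]; omega
  exact ((InDoubleCoset.self n).mul_diag hu0 hu).of_eq (Matrix.ext fun k l => by
    fin_cases k <;> fin_cases l <;> simp [mul_div_cancel₀ _ (tK_pow_ne_zero n)])

lemma exists_inDoubleCoset_diag {a : K F} (ha : a ≠ 0) :
    ∃ i, InDoubleCoset i !![a, 0; 0, 1] := by
  by_cases h : a.order ≤ 0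
  · exact ⟨_, inDoubleCoset_diag_of_order_nonpos ha h⟩
  have h' : a⁻¹.order ≤ 0 := by rw [order_inv ha]; omega
  exact ⟨_, ((inDoubleCoset_diag_of_order_nonpos (inv_ne_zero ha) h').swap_mul.mul_swap.smul
    ha).of_eq (Matrix.ext fun k l => by fin_cases k <;> fin_cases l <;> simp [ha])⟩

lemma exists_inDoubleCoset_upper {a : K F} (ha : a ≠ 0) (β : K F) :
    ∃ i, InDoubleCoset i !![a, β; 0, 1] := by
  obtain ⟨p, hp, hf⟩ := exists_mem_Zsub_sub_mem_FracSet β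
  generalize hfβ : β - p = f at hf
  obtain rfl : β = f + p := by rw [← hfβ, sub_add_cancel]
  suffices ∃ i, InDoubleCoset i !![a, f; 0, 1] from
    this.imp fun i hi => (hi.upper_mul hp).of_eq (Matrix.ext fun k l => by
      fin_cases k <;> fin_cases l <;> simp)
  by_cases hfa : InO (f / a)
  · exact (exists_inDoubleCoset_diag ha).imp fun i hi =>
      (hi.mul_upper hfa).of_eq (Matrix.ext fun k l => by
        fin_cases k <;> fin_cases l <;> simp [mul_div_cancel₀ _ ha])
  have hf0 : f ≠ 0 := by rintro rfl; simp at hfa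
  have hord : f.order < a.order := by
    rw [inO_iff_zero_le_order (div_ne_zero hf0 ha), order_div hf0 ha] at hfa; omega
  have hf1 := one_le_order_of_mem_FracSet hf hf0
  have ha' : -a / f ^ 2 ≠ 0 := div_ne_zero (neg_ne_zero.2 ha) (pow_ne_zero 2 hf0)
  have hord' : (-a / f ^ 2).order = a.order - 2 * f.order := by
    rw [order_div (neg_ne_zero.2 ha) (pow_ne_zero 2 hf0), order_neg, pow_two, order_mul hf0 hf0]
    ring
  have hfa' : InO (a / f) := by
    rw [inO_iff_zero_le_order (div_ne_zero ha hf0), order_div ha hf0]; omega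
  have : (-a / f ^ 2).order.toNat < a.order.toNat := by omega
  -- `!![a, f; 0, 1] = f • (!![0, 1; 1, 0] * !![-a / f ^ 2, f⁻¹; 0, 1] * !![1, 0; a / f, 1])`
  exact (exists_inDoubleCoset_upper ha' f⁻¹).imp fun i hi =>
    ((hi.swap_mul.mul_lower hfa').smul hf0).of_eq (Matrix.ext fun k l => by
      fin_cases k <;> fin_cases l <;> simp [hf0] <;> field_simp; ring)
termination_by a.order.toNat

lemma exists_inDoubleCoset_of_inO_div {a b r s : K F} (hdet : a * s - b * r ≠ 0) (hs : s ≠ 0)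
    (hrs : InO (r / s)) : ∃ i, InDoubleCoset i !![a, b; r, s] := by
  have ha' : (a * s - b * r) / s ^ 2 ≠ 0 := div_ne_zero hdet (pow_ne_zero 2 hs)
  exact (exists_inDoubleCoset_upper ha' (b / s)).imp fun i hi =>
    ((hi.mul_lower hrs).smul hs).of_eq (Matrix.ext fun k l => by
      fin_cases k <;> fin_cases l <;> simp <;> field_simp; ring)

lemma exists_inDoubleCoset_of_det_ne_zero {a b r s : K F} (hdet : a * s - b * r ≠ 0) :
    ∃ i, InDoubleCoset i !![a, b; r, s] := by
  by_cases h : s ≠ 0 ∧ InO (r / s)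
  · exact exists_inDoubleCoset_of_inO_div hdet h.1 h.2
  have hr : r ≠ 0 := by rintro rfl; simp_all
  have hsr : InO (s / r) := by
    by_cases hs : s = 0
    · simp [hs]
    · simpa using inO_inv_of_not_inO (h ⟨hs, ·⟩)
  have hdet' : b * r - a * s ≠ 0 := by rwa [← neg_sub, neg_ne_zero]
  exact (exists_inDoubleCoset_of_inO_div hdet' hr hsr).imp fun i hi =>
    hi.mul_swap.of_eq (Matrix.ext fun k l => by fin_cases k <;> fin_cases l <;> simp)

lemma exists_inDoubleCoset (g : GL (Fin 2) (K F)) : ∃ i, InDoubleCoset i g.val := by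
  have hdet : g.val.det ≠ 0 := g.isUnit.map detMonoidHom |>.ne_zero
  rw [det_fin_two] at hdet
  rw [eta_fin_two g.val]
  exact exists_inDoubleCoset_of_det_ne_zero hdet

lemma le_of_mul_diag_eq {i j : ℕ} {γ w : GL (Fin 2) (K F)} {e : K F} (hγ : InGammaRep γ)
    (hw : InWRep w) (he : e ≠ 0)
    (h : γ.val * !![tK F ^ i, 0; 0, 1] = e • (!![tK F ^ j, 0; 0, 1] * w.val)) : i ≤ j := by
  obtain ⟨hγ, c, hc, hdetγ⟩ := hγ
  obtain ⟨hw, hdetw0, hdetw⟩ := inWRep_iff.1 hw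
  have hc' : algebraMap F (K F) c ≠ 0 := by simpa using hc
  have hdet : algebraMap F (K F) c * tK F ^ i = e ^ 2 * (tK F ^ j * w.val.det) := by
    simpa only [det_mul, det_smul, hdetγ, det_fin_two_of, Fintype.card_fin, mul_one, mul_zero,
      sub_zero] using congrArg det h
  have hdet_order := congrArg order hdet
  rw [order_mul hc' (tK_pow_ne_zero i), order_mul (pow_ne_zero 2 he)
    (mul_ne_zero (tK_pow_ne_zero j) hdetw0), order_mul (tK_pow_ne_zero j) hdetw0, pow_two,
    order_mul he he, order_tK_pow, order_tK_pow, hdetw, algebraMap_eq_single,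
    order_single hc] at hdet_order
  have bound {x z : K F} (hx : x ∈ Zsub F) (hx0 : x ≠ 0) (hz : -(j : ℤ) ≤ z.order)
      (hxz : x * tK F ^ i = e * z) : i ≤ j := by
    have hz0 : z ≠ 0 := by
      rintro rfl; exact mul_ne_zero hx0 (tK_pow_ne_zero i) (hxz.trans (mul_zero e))
    have := congrArg order hxz
    rw [order_mul hx0 (tK_pow_ne_zero i), order_mul he hz0, order_tK_pow] at this
    have := order_nonpos_of_mem_Zsub hx hx0
    omega
  have h0 : γ.val 0 0 * tK F ^ i = e * (tK F ^ j * w.val 0 0) := by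
    simpa [Matrix.mul_apply, vecMul, dotProduct] using congrFun (congrFun h 0) 0
  have h1 : γ.val 1 0 * tK F ^ i = e * w.val 1 0 := by
    simpa [Matrix.mul_apply, vecMul, dotProduct] using congrFun (congrFun h 1) 0
  by_cases hγ0 : γ.val 0 0 = 0
  · have hγ1 : γ.val 1 0 ≠ 0 := by
      rintro hγ1
      exact hc' (by simp [← hdetγ, det_fin_two, hγ0, hγ1])
    exact bound (hγ 1 0) hγ1 (by have := order_nonneg_of_inO (hw 1 0); omega) h1
  · refine bound (hγ 0 0) hγ0 ?_ h0
    rcases eq_or_ne (w.val 0 0) 0 with hw0 | hw0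
    · simp [hw0]
    · rw [order_mul (tK_pow_ne_zero j) hw0, order_tK_pow]
      have := order_nonneg_of_inO (hw 0 0)
      omega

lemma InDoubleCoset.le {i j : ℕ} {M : Matrix (Fin 2) (Fin 2) (K F)} (h₁ : InDoubleCoset i M)
    (h₂ : InDoubleCoset j M) : i ≤ j := by
  obtain ⟨γ, w, c, hγ, hw, rfl⟩ := h₁
  obtain ⟨γ', w', c', hγ', hw', h⟩ := h₂
  have h' : γ.val * !![tK F ^ i, 0; 0, 1] * w.val =
      ((c : K F)⁻¹ * c') • (γ'.val * !![tK F ^ j, 0; 0, 1] * w'.val) := by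
    rw [← smul_smul, ← h, inv_smul_smul₀ c.ne_zero]
  refine le_of_mul_diag_eq (e := (c : K F)⁻¹ * (c' : K F))
    ((gammaGroup F).mul_mem ((gammaGroup F).inv_mem hγ') hγ)
    ((wGroup F).mul_mem hw' ((wGroup F).inv_mem hw)) (by simp) ?_
  calc (γ'⁻¹ * γ).val * !![tK F ^ i, 0; 0, 1]
      = (γ'⁻¹).val * (γ.val * !![tK F ^ i, 0; 0, 1] * w.val) * (w⁻¹).val := by
        simp [Matrix.mul_assoc]
    _ = ((c : K F)⁻¹ * c') • (!![tK F ^ j, 0; 0, 1] * (w' * w⁻¹).val) := by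
        rw [h', Matrix.mul_smul, Matrix.smul_mul, Units.val_mul, ← Matrix.mul_assoc,
          ← Matrix.mul_assoc, Units.inv_mul, Matrix.one_mul, Matrix.mul_assoc]

end Cartan

theorem cartan_double_coset_decomposition_general (F : Type) [Field F]
    (g : GL (Fin 2) (K F)) :
    ∃! i : ℕ, ∃ (γ w : GL (Fin 2) (K F)) (c : (K F)ˣ),
      InGammaRep γ ∧ InWRep w ∧
      g.val = (c : K F) • (γ.val * !![(tK F) ^ i, 0; 0, 1] * w.val) := by
  show ∃! i, Cartan.InDoubleCoset i g.val
  obtain ⟨i, hi⟩ := Cartan.exists_inDoubleCoset g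
  exact ⟨i, hi, fun j hj => le_antisymm (hj.le hi) (hi.le hj)⟩

/-- `G = PGL(2,K)` is the disjoint union over `i ≥ 0` of the double
cosets `Γ · diag(tⁱ,1) · W`: every `g` lies in exactly one of them (equality in
`PGL` is equality of `GL` representatives up to a scalar). -/
theorem cartan_double_coset_decomposition (F : Type) [Field F] [Fintype F]
    (g : GL (Fin 2) (K F)) :
    ∃! i : ℕ, ∃ (γ w : GL (Fin 2) (K F)) (c : (K F)ˣ),
      InGammaRep γ ∧ InWRep w ∧
      g.val = (c : K F) • (γ.val * !![(tK F) ^ i, 0; 0, 1] * w.val) :=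
  cartan_double_coset_decomposition_general F g
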